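/- arXiv:2207.00800 — 4 statements merged into one kernel-verified Lean document; each statement's English description precedes it below -/
import Mathlib

section
/- Let n ≥ 1, let π : Fin n → ℝ satisfy π_i > 0 for all i, let α > 1, and let K^T satisfy 0 < K^T ≤ Σ_i π_i. For each i define f_i(K) = −απ_i + (α−1)√(π_i·K) for 0 ≤ K ≤ π_i and f_i(K) = −K for K > π_i. Then over the feasible set {K : Fin n → ℝ | K_i ≥ 0 for all i and Σ_i K_i ≤ K^T}, the function K ↦ Σ_i f_i(K_i) attains its maximum uniquely at K_i* = π_i·Z for all i, where Z = K^T / Σ_j π_j, and the maximum value is −α·Σ_i π_i + (α−1)·√(K^T · Σ_i π_i). Moreover the induced interest-group best responses are L_i* = √(π_i K_i*) − K_i* = π_i(√Z − Z). -/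
open Finset in
/-- Tangent line bound for sqrt at `a`, with equality case. -/
theorem sqrt_tangent (a x : ℝ) (ha : 0 < a) (hx : 0 ≤ x) :
    Real.sqrt x ≤ Real.sqrt a + (x - a) / (2 * Real.sqrt a) ∧
    (Real.sqrt x = Real.sqrt a + (x - a) / (2 * Real.sqrt a) → x = a) := by
  have hsa : 0 < Real.sqrt a := Real.sqrt_pos.mpr ha
  have hx2 : Real.sqrt x ^ 2 = x := Real.sq_sqrt hx
  have ha2 : Real.sqrt a ^ 2 = a := Real.sq_sqrt ha.le
  constructor
  · rw [← sub_le_iff_le_add', le_div_iff₀ (by positivity)]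
    nlinarith [sq_nonneg (Real.sqrt x - Real.sqrt a)]
  · intro h
    have h2 : Real.sqrt x * (2 * Real.sqrt a) =
        Real.sqrt a * (2 * Real.sqrt a) + (x - a) := by
      field_simp at h
      linarith
    have h3 : (Real.sqrt x - Real.sqrt a) ^ 2 = 0 := by nlinarith
    have h4 : Real.sqrt x = Real.sqrt a := by
      have := pow_eq_zero_iff (n := 2) (by norm_num) |>.mp h3
      linarith
    rw [← hx2, ← ha2, h4]

open Finset in
/-- With `n ≥ 1`, `π_i > 0`, `α > 1`, `0 < K^T ≤ Σ π_i`, and per-contest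
payoffs `f_i(K) = -απ_i + (α-1)√(π_i K)` for `0 ≤ K ≤ π_i`, `f_i(K) = -K` for `K > π_i`:
over the feasible set `{K | K_i ≥ 0, Σ K_i ≤ K^T}` the function `K ↦ Σ f_i(K_i)`
attains its maximum uniquely at `K*_i = π_i Z` with `Z = K^T / Σ π_j`, the maximum
value is `-α Σ π_i + (α-1)√(K^T · Σ π_i)`, and the induced best responses are
`L*_i = √(π_i K*_i) - K*_i = π_i(√Z - Z)`. -/
theorem stmt_4 (n : ℕ) (hn : 1 ≤ n) (π : Fin n → ℝ) (hπ : ∀ i, 0 < π i)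
    (α KT : ℝ) (hα : 1 < α) (hKT0 : 0 < KT) (hKT : KT ≤ ∑ i, π i)
    (f : Fin n → ℝ → ℝ)
    (hf1 : ∀ i K, 0 ≤ K → K ≤ π i → f i K = -α * π i + (α - 1) * Real.sqrt (π i * K))
    (hf2 : ∀ i K, π i < K → f i K = -K)
    (Z : ℝ) (hZ : Z = KT / ∑ j, π j)
    (Kstar : Fin n → ℝ) (hKstar : ∀ i, Kstar i = π i * Z) :
    ((∀ i, 0 ≤ Kstar i) ∧ ∑ i, Kstar i ≤ KT) ∧
    (∀ K : Fin n → ℝ, (∀ i, 0 ≤ K i) → ∑ i, K i ≤ KT →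
      ∑ i, f i (K i) ≤ ∑ i, f i (Kstar i)) ∧
    (∀ K : Fin n → ℝ, (∀ i, 0 ≤ K i) → ∑ i, K i ≤ KT →
      ∑ i, f i (K i) = ∑ i, f i (Kstar i) → K = Kstar) ∧
    (∑ i, f i (Kstar i) = -α * ∑ i, π i + (α - 1) * Real.sqrt (KT * ∑ i, π i)) ∧
    (∀ i, Real.sqrt (π i * Kstar i) - Kstar i = π i * (Real.sqrt Z - Z)) := by
  have hne : Nonempty (Fin n) := Fin.pos_iff_nonempty.mp hn
  have hS : 0 < ∑ i, π i := Finset.sum_pos (fun i _ => hπ i) Finset.univ_nonempty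
  have hZpos : 0 < Z := by rw [hZ]; positivity
  have hZ1 : Z ≤ 1 := by rw [hZ]; exact (div_le_one hS).mpr hKT
  have hsZ : 0 < Real.sqrt Z := Real.sqrt_pos.mpr hZpos
  have hKT' : (∑ i, π i) * Z = KT := by rw [hZ]; field_simp
  have hK0 : ∀ i, 0 ≤ Kstar i := fun i => by
    rw [hKstar]; exact mul_nonneg (hπ i).le hZpos.le
  have hKsum : ∑ i, Kstar i = KT := by
    rw [Finset.sum_congr rfl fun i _ => hKstar i, ← Finset.sum_mul, hKT']
  have hKle : ∀ i, Kstar i ≤ π i := fun i => by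
    rw [hKstar]
    nlinarith [hπ i]
  have hsqrtKstar : ∀ i, Real.sqrt (π i * (π i * Z)) = π i * Real.sqrt Z := fun i => by
    rw [show π i * (π i * Z) = π i ^ 2 * Z by ring, Real.sqrt_mul (sq_nonneg _),
      Real.sqrt_sq (hπ i).le]
  have hval : ∀ i, f i (Kstar i) = -α * π i + (α - 1) * (π i * Real.sqrt Z) := fun i => by
    rw [hf1 i _ (hK0 i) (hKle i), hKstar, hsqrtKstar]
  -- the tangent majorant g
  set g : Fin n → ℝ → ℝ := fun i x =>
    -α * π i + (α - 1) * (π i * Real.sqrt Z + (x - π i * Z) / (2 * Real.sqrt Z)) with hg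
  have key : ∀ (i : Fin n) (x : ℝ), 0 ≤ x →
      f i x ≤ g i x ∧ (f i x = g i x → x = π i * Z) := by
    intro i x hx0
    have hπi := hπ i
    have ht := sqrt_tangent (π i * (π i * Z)) (π i * x) (mul_pos hπi (mul_pos hπi hZpos)) (mul_nonneg hπi.le hx0)
    rw [hsqrtKstar i] at ht
    have hdiv : (π i * x - π i * (π i * Z)) / (2 * (π i * Real.sqrt Z)) =
        (x - π i * Z) / (2 * Real.sqrt Z) := by
      field_simp
    rw [hdiv] at ht
    have hα1 : (0:ℝ) < α - 1 := by linarith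
    rcases le_or_gt x (π i) with hx | hx
    · rw [hf1 i x hx0 hx, hg]
      constructor
      · have := mul_le_mul_of_nonneg_left ht.1 hα1.le
        simp only []
        linarith
      · intro h
        have hs : Real.sqrt (π i * x) =
            π i * Real.sqrt Z + (x - π i * Z) / (2 * Real.sqrt Z) := by
          simp only [] at h
          have := mul_left_cancel₀ (ne_of_gt hα1) (by linarith : (α - 1) * Real.sqrt (π i * x)
            = (α - 1) * (π i * Real.sqrt Z + (x - π i * Z) / (2 * Real.sqrt Z)))
          exact this
        have := ht.2 hs
        exact mul_left_cancel₀ (ne_of_gt hπi) this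
    · rw [hf2 i x hx]
      have hπx : π i ≤ Real.sqrt (π i * x) := by
        calc π i = Real.sqrt (π i * π i) := (Real.sqrt_mul_self hπi.le).symm
          _ ≤ Real.sqrt (π i * x) := Real.sqrt_le_sqrt (by nlinarith)
      have h1 : -x < -α * π i + (α - 1) * Real.sqrt (π i * x) := by
        nlinarith [mul_le_mul_of_nonneg_left hπx hα1.le]
      have h2 : -α * π i + (α - 1) * Real.sqrt (π i * x) ≤ g i x := by
        have := mul_le_mul_of_nonneg_left ht.1 hα1.le
        simp only [hg]
        linarith
      constructor
      · linarith
      · intro heq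
        exact absurd heq (ne_of_lt (lt_of_lt_of_le h1 h2))
  have hgsum : ∀ K : Fin n → ℝ, ∑ i, g i (K i) =
      (∑ i, f i (Kstar i)) + (α - 1) / (2 * Real.sqrt Z) * ((∑ i, K i) - KT) := by
    intro K
    have h1 : ∀ i, g i (K i) = f i (Kstar i) + (α - 1) / (2 * Real.sqrt Z) * (K i - π i * Z) :=
      fun i => by rw [hval i, hg]; ring
    rw [Finset.sum_congr rfl fun i _ => h1 i, Finset.sum_add_distrib, ← Finset.mul_sum]
    congr 1
    rw [Finset.sum_sub_distrib, ← Finset.sum_mul, hKT']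
  have hcoef : 0 < (α - 1) / (2 * Real.sqrt Z) := div_pos (by linarith) (by positivity)
  refine ⟨⟨hK0, hKsum.le⟩, ?_, ?_, ?_, ?_⟩
  · intro K hK0' hKsum'
    calc ∑ i, f i (K i) ≤ ∑ i, g i (K i) :=
          Finset.sum_le_sum fun i _ => (key i (K i) (hK0' i)).1
      _ = (∑ i, f i (Kstar i)) + (α - 1) / (2 * Real.sqrt Z) * ((∑ i, K i) - KT) := hgsum K
      _ ≤ ∑ i, f i (Kstar i) := by nlinarith
  · intro K hK0' hKsum' heq
    have hle : ∀ i ∈ Finset.univ, f i (K i) ≤ g i (K i) :=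
      fun i _ => (key i (K i) (hK0' i)).1
    have hsum_eq : ∑ i, f i (K i) = ∑ i, g i (K i) := by
      refine le_antisymm (Finset.sum_le_sum hle) ?_
      rw [heq, hgsum K]
      nlinarith
    have := (Finset.sum_eq_sum_iff_of_le hle).mp hsum_eq
    funext i
    rw [hKstar i]
    exact (key i (K i) (hK0' i)).2 (this i (Finset.mem_univ i))
  · have hsqrtKTS : Real.sqrt (KT * ∑ i, π i) = Real.sqrt Z * ∑ i, π i := by
      rw [← hKT', show (∑ i, π i) * Z * (∑ i, π i) = Z * (∑ i, π i) ^ 2 by ring,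
        Real.sqrt_mul hZpos.le, Real.sqrt_sq hS.le]
    calc ∑ i, f i (Kstar i)
        = ∑ i, (-α * π i + (α - 1) * Real.sqrt Z * π i) :=
          Finset.sum_congr rfl fun i _ => by rw [hval i]; ring
      _ = -α * (∑ i, π i) + (α - 1) * Real.sqrt Z * (∑ i, π i) := by
          rw [Finset.sum_add_distrib, ← Finset.mul_sum, ← Finset.mul_sum]
      _ = -α * ∑ i, π i + (α - 1) * Real.sqrt (KT * ∑ i, π i) := by
          rw [hsqrtKTS]; ring
  · intro i
    rw [hKstar i, hsqrtKstar i]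
    ring
end

section
/- Let n ≥ 1, let π : Fin n → ℝ satisfy π_i > 0 for all i, let α > 1, and let K^T ≥ Σ_i π_i. For each i define f_i(K) = −απ_i + (α−1)√(π_i·K) for 0 ≤ K ≤ π_i and f_i(K) = −K for K > π_i. Then over the feasible set {K : Fin n → ℝ | K_i ≥ 0 for all i and Σ_i K_i ≤ K^T}, the function K ↦ Σ_i f_i(K_i) attains its maximum uniquely at K_i* = π_i for all i, with maximum value −Σ_i π_i. -/
open Finset in
/-- With `n ≥ 1`, `π_i > 0`, `α > 1`, `K^T ≥ Σ π_i`, and per-contest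
payoffs `f_i(K) = -απ_i + (α-1)√(π_i K)` for `0 ≤ K ≤ π_i`, `f_i(K) = -K` for `K > π_i`:
over the feasible set `{K | K_i ≥ 0, Σ K_i ≤ K^T}` the function `K ↦ Σ f_i(K_i)`
attains its maximum uniquely at `K*_i = π_i` for all `i`, with maximum value `-Σ π_i`. -/
theorem stmt_5 (n : ℕ) (hn : 1 ≤ n) (π : Fin n → ℝ) (hπ : ∀ i, 0 < π i)
    (α KT : ℝ) (hα : 1 < α) (hKT : (∑ i, π i) ≤ KT)
    (f : Fin n → ℝ → ℝ)
    (hf1 : ∀ i K, 0 ≤ K → K ≤ π i → f i K = -α * π i + (α - 1) * Real.sqrt (π i * K))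
    (hf2 : ∀ i K, π i < K → f i K = -K) :
    ((∀ i, (0:ℝ) ≤ π i) ∧ ∑ i, π i ≤ KT) ∧
    (∀ K : Fin n → ℝ, (∀ i, 0 ≤ K i) → ∑ i, K i ≤ KT →
      ∑ i, f i (K i) ≤ ∑ i, f i (π i)) ∧
    (∀ K : Fin n → ℝ, (∀ i, 0 ≤ K i) → ∑ i, K i ≤ KT →
      ∑ i, f i (K i) = ∑ i, f i (π i) → K = π) ∧
    (∑ i, f i (π i) = -∑ i, π i) := by
  have hopt : ∀ i, f i (π i) = -π i := by
    intro i
    rw [hf1 i (π i) (hπ i).le le_rfl, Real.sqrt_mul_self (hπ i).le]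
    ring
  have hle : ∀ i K, 0 ≤ K → f i K ≤ -π i := by
    intro i K hK0
    rcases le_or_gt K (π i) with h | h
    · rw [hf1 i K hK0 h]
      have hs : Real.sqrt (π i * K) ≤ π i := by
        calc Real.sqrt (π i * K) ≤ Real.sqrt (π i * π i) := by
              apply Real.sqrt_le_sqrt
              nlinarith [hπ i]
          _ = π i := Real.sqrt_mul_self (hπ i).le
      nlinarith
    · rw [hf2 i K h]; linarith
  have hlt : ∀ i K, 0 ≤ K → K ≠ π i → f i K < -π i := by
    intro i K hK0 hne
    rcases lt_trichotomy K (π i) with h | h | h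
    · rw [hf1 i K hK0 h.le]
      have hs : Real.sqrt (π i * K) < π i := by
        have : Real.sqrt (π i * K) < Real.sqrt (π i * π i) := by
          apply Real.sqrt_lt_sqrt (by nlinarith [hπ i])
          nlinarith [hπ i]
        rwa [Real.sqrt_mul_self (hπ i).le] at this
      nlinarith
    · exact absurd h hne
    · rw [hf2 i K h]; linarith
  refine ⟨⟨fun i => (hπ i).le, hKT⟩, ?_, ?_, ?_⟩
  · intro K hK0 _
    apply Finset.sum_le_sum
    intro i _
    rw [hopt i]
    exact hle i (K i) (hK0 i)
  · intro K hK0 _ heq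
    by_contra hne
    have ⟨j, hj⟩ : ∃ j, K j ≠ π j := by
      by_contra h
      push_neg at h
      exact hne (funext h)
    have : ∑ i, f i (K i) < ∑ i, f i (π i) := by
      apply Finset.sum_lt_sum (fun i _ => by rw [hopt i]; exact hle i (K i) (hK0 i))
      exact ⟨j, Finset.mem_univ j, by rw [hopt j]; exact hlt j (K j) (hK0 j) hj⟩
    linarith
  · simp [hopt]
end

section
/- Let π > 0, α > 0 and μ ≥ 0 be real numbers. Then there is a unique pair (K, L) with K > 0 satisfying the system L = √(πK) − K and K = √(απL/(1+μ)) − L, namely K = π·α²/(α+1+μ)² and L = π·α(1+μ)/(α+1+μ)². -/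
/-- With `π > 0`, `α > 0`, `μ ≥ 0`, there is a unique pair `(K, L)` with
`K > 0` satisfying `L = √(πK) - K` and `K = √(απL/(1+μ)) - L`, namely
`K = πα²/(α+1+μ)²` and `L = πα(1+μ)/(α+1+μ)²`. -/
theorem stmt_7 (π α μ : ℝ) (hπ : 0 < π) (hα : 0 < α) (hμ : 0 ≤ μ) :
    (0 < π * α ^ 2 / (α + 1 + μ) ^ 2 ∧
      π * α * (1 + μ) / (α + 1 + μ) ^ 2 =
        Real.sqrt (π * (π * α ^ 2 / (α + 1 + μ) ^ 2)) - π * α ^ 2 / (α + 1 + μ) ^ 2 ∧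
      π * α ^ 2 / (α + 1 + μ) ^ 2 =
        Real.sqrt (α * π * (π * α * (1 + μ) / (α + 1 + μ) ^ 2) / (1 + μ)) -
          π * α * (1 + μ) / (α + 1 + μ) ^ 2) ∧
    (∀ K L : ℝ, 0 < K → L = Real.sqrt (π * K) - K →
      K = Real.sqrt (α * π * L / (1 + μ)) - L →
      K = π * α ^ 2 / (α + 1 + μ) ^ 2 ∧ L = π * α * (1 + μ) / (α + 1 + μ) ^ 2) := by
  have h1μ : (0:ℝ) < 1 + μ := by linarith
  have hs : (0:ℝ) < α + 1 + μ := by linarith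
  have hs' : (α + 1 + μ) ≠ 0 := ne_of_gt hs
  have hsq1 : π * (π * α ^ 2 / (α + 1 + μ) ^ 2) = (π * α / (α + 1 + μ)) ^ 2 := by
    field_simp
  have hsqrt1 : Real.sqrt (π * (π * α ^ 2 / (α + 1 + μ) ^ 2)) = π * α / (α + 1 + μ) := by
    rw [hsq1, Real.sqrt_sq (by positivity)]
  have hsq2 : α * π * (π * α * (1 + μ) / (α + 1 + μ) ^ 2) / (1 + μ)
      = (π * α / (α + 1 + μ)) ^ 2 := by
    field_simp
  have hsqrt2 : Real.sqrt (α * π * (π * α * (1 + μ) / (α + 1 + μ) ^ 2) / (1 + μ))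
      = π * α / (α + 1 + μ) := by
    rw [hsq2, Real.sqrt_sq (by positivity)]
  refine ⟨⟨by positivity, ?_, ?_⟩, ?_⟩
  · rw [hsqrt1]; field_simp; ring
  · rw [hsqrt2]; field_simp; ring
  · intro K L hK h1 h2
    have e1 : Real.sqrt (π * K) = K + L := by rw [h1]; ring
    have e2 : Real.sqrt (α * π * L / (1 + μ)) = K + L := by rw [h2]; ring
    have hKL : 0 < K + L := by
      rw [← e1]; exact Real.sqrt_pos.mpr (by positivity)
    have hL : 0 < L := by
      by_contra h
      push_neg at h
      have harg : α * π * L / (1 + μ) ≤ 0 := by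
        apply div_nonpos_of_nonpos_of_nonneg
        · nlinarith [mul_pos hα hπ]
        · linarith
      have : Real.sqrt (α * π * L / (1 + μ)) = 0 := Real.sqrt_eq_zero_of_nonpos harg
      rw [e2] at this; linarith
    have sq1 : π * K = (K + L) ^ 2 := by
      have := Real.sq_sqrt (show (0:ℝ) ≤ π * K by positivity)
      rw [e1] at this; linarith [this]
    have sq2 : α * π * L / (1 + μ) = (K + L) ^ 2 := by
      have := Real.sq_sqrt (show (0:ℝ) ≤ α * π * L / (1 + μ) by positivity)
      rw [e2] at this; linarith [this]
    have hrel : π * K * (1 + μ) = α * π * L := by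
      have h' : π * K = α * π * L / (1 + μ) := by rw [sq1, sq2]
      rw [eq_div_iff h1μ.ne'] at h'
      linarith
    have hαL : α * L = K * (1 + μ) :=
      mul_left_cancel₀ hπ.ne' (by linear_combination -hrel)
    have h4 : π * K * α ^ 2 = K ^ 2 * (α + 1 + μ) ^ 2 := by
      linear_combination α ^ 2 * sq1 + (2 * K * α + K * (1 + μ) + α * L) * hαL
    have h5 : K * (α + 1 + μ) ^ 2 = π * α ^ 2 :=
      mul_left_cancel₀ hK.ne' (by linear_combination -h4)
    constructor
    · rw [eq_div_iff (by positivity : ((α + 1 + μ)^2 : ℝ) ≠ 0)]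
      linarith
    · rw [eq_div_iff (by positivity : ((α + 1 + μ)^2 : ℝ) ≠ 0)]
      exact mul_left_cancel₀ hα.ne'
        (by linear_combination (α + 1 + μ) ^ 2 * hαL + (1 + μ) * h5)
end

section
/- Let α > 2, Π > 0 and K^G ≥ 0 be real numbers. If real numbers x and y satisfy x + y = Π and K^G + (α(α+2)/(α+1)²)·x = (α²/(α+1)²)·y, then x = (1/2)·((α/(α+1))·Π − ((α+1)/α)·K^G), and moreover x < (1/2)·(Π − K^G). -/
/-- With `α > 2`, `Π > 0`, `K^G ≥ 0`: if `x + y = Π` and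
`K^G + (α(α+2)/(α+1)²)x = (α²/(α+1)²)y`, then
`x = (1/2)((α/(α+1))Π - ((α+1)/α)K^G)`, and moreover `x < (1/2)(Π - K^G)`. -/
theorem stmt_10 (α Ptot KG x y : ℝ) (hα : 2 < α) (hP : 0 < Ptot) (hKG : 0 ≤ KG)
    (h1 : x + y = Ptot)
    (h2 : KG + (α * (α + 2) / (α + 1) ^ 2) * x = (α ^ 2 / (α + 1) ^ 2) * y) :
    x = (1 / 2) * ((α / (α + 1)) * Ptot - ((α + 1) / α) * KG) ∧
    x < (1 / 2) * (Ptot - KG) := by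
  have hα0 : (0:ℝ) < α := by linarith
  have hα1 : (0:ℝ) < α + 1 := by linarith
  have hx : x = (1 / 2) * ((α / (α + 1)) * Ptot - ((α + 1) / α) * KG) := by
    have hy : y = Ptot - x := by linarith
    rw [hy] at h2
    field_simp at h2 ⊢
    nlinarith [sq_nonneg (α+1), hα0.ne']
  refine ⟨hx, ?_⟩
  rw [hx]
  have h1' : (α / (α + 1)) * Ptot < Ptot := by
    rw [div_mul_eq_mul_div, div_lt_iff₀ hα1]
    nlinarith
  have h2' : KG ≤ ((α + 1) / α) * KG := by
    rw [div_mul_eq_mul_div, le_div_iff₀ hα0]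
    nlinarith
  linarith
end
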